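/- For every integer k ≥ 3, the set A is the unique metric basis of G_k: if W is a resolving set of G_k with |W| = k, then W = A. -/
import Mathlib


open SimpleGraph

/-- `W` is a resolving set of `G`: every pair of distinct vertices is
distinguished by its distance to some vertex of `W`. -/
def IsResolving {V : Type*} (G : SimpleGraph V) (W : Set V) : Prop :=
  ∀ x y : V, x ≠ y → ∃ z ∈ W, G.dist x z ≠ G.dist y z

/-- The metric dimension of `G`: the minimum cardinality of a resolving set. -/
noncomputable def metricDim {V : Type*} (G : SimpleGraph V) : ℕ :=
  sInf {n | ∃ W : Set V, W.ncard = n ∧ IsResolving G W}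

/-- The vertex set of `G_k`: the set `A` (a copy of `Fin k`), the set
`B = {b_S : ∅ ≠ S ⊆ A}` and the set `C = {c_S : ∅ ≠ S ⊆ A}`. -/
abbrev GkVert (k : ℕ) :=
  Fin k ⊕ ({S : Finset (Fin k) // S.Nonempty} ⊕ {S : Finset (Fin k) // S.Nonempty})

/-- The relation generating the edges of `G_k`: each of `A`, `B`, `C` is a clique,
`b_S` is adjacent to exactly the vertices of `A` in `S`, and `b_S` is adjacent to `c_S`. -/
def GkRel (k : ℕ) : GkVert k → GkVert k → Prop
  | Sum.inl _, Sum.inl _ => True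
  | Sum.inl a, Sum.inr (Sum.inl S) => a ∈ S.val
  | Sum.inr (Sum.inl _), Sum.inr (Sum.inl _) => True
  | Sum.inr (Sum.inl S), Sum.inr (Sum.inr T) => S = T
  | Sum.inr (Sum.inr _), Sum.inr (Sum.inr _) => True
  | _, _ => False

/-- The graph `G_k` from Definition 3.5. -/
def Gk (k : ℕ) : SimpleGraph (GkVert k) := SimpleGraph.fromRel (GkRel k)

namespace GkAux

variable {k : ℕ}

/-- nonempty subsets of `A` -/
abbrev NES (k : ℕ) := {S : Finset (Fin k) // S.Nonempty}

def vb (S : NES k) : GkVert k := Sum.inr (Sum.inl S)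
def vc (S : NES k) : GkVert k := Sum.inr (Sum.inr S)

lemma adj_aa {a a' : Fin k} : (Gk k).Adj (Sum.inl a) (Sum.inl a') ↔ a ≠ a' := by
  simp [Gk, fromRel_adj, GkRel]

lemma adj_ab {a : Fin k} {S : NES k} : (Gk k).Adj (Sum.inl a) (vb S) ↔ a ∈ S.val := by
  simp [Gk, fromRel_adj, GkRel, vb]

lemma not_adj_ac {a : Fin k} {S : NES k} : ¬ (Gk k).Adj (Sum.inl a) (vc S) := by
  simp [Gk, fromRel_adj, GkRel, vc]

lemma adj_bb {S T : NES k} : (Gk k).Adj (vb S) (vb T) ↔ S ≠ T := by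
  simp [Gk, fromRel_adj, GkRel, vb]

lemma adj_bc {S T : NES k} : (Gk k).Adj (vb S) (vc T) ↔ S = T := by
  simp [Gk, fromRel_adj, GkRel, vb, vc]

lemma adj_cc {S T : NES k} : (Gk k).Adj (vc S) (vc T) ↔ S ≠ T := by
  simp [Gk, fromRel_adj, GkRel, vc]

section DistHelpers

variable {V : Type*} {G : SimpleGraph V}

lemma dist_eq_two {x y m : V} (hne : x ≠ y) (hadj : ¬G.Adj x y)
    (h1 : G.Adj x m) (h2 : G.Adj m y) : G.dist x y = 2 := by
  have hle : G.dist x y ≤ 2 := by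
    simpa using dist_le (Walk.cons h1 (Walk.cons h2 Walk.nil))
  have hr : G.Reachable x y := ⟨Walk.cons h1 (Walk.cons h2 Walk.nil)⟩
  have h0 : G.dist x y ≠ 0 := by
    rw [dist_ne_zero_iff_ne_and_reachable]; exact ⟨hne, hr⟩
  have h1' : G.dist x y ≠ 1 := fun h => hadj (dist_eq_one_iff_adj.mp h)
  omega

lemma dist_eq_three {x y : V} (p : G.Walk x y) (hp : p.length = 3)
    (hne : x ≠ y) (hadj : ¬G.Adj x y)
    (hcom : ∀ m, G.Adj x m → ¬G.Adj m y) : G.dist x y = 3 := by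
  have hle : G.dist x y ≤ 3 := hp ▸ dist_le p
  have hr : G.Reachable x y := ⟨p⟩
  have h0 : G.dist x y ≠ 0 := by
    rw [dist_ne_zero_iff_ne_and_reachable]; exact ⟨hne, hr⟩
  have h1' : G.dist x y ≠ 1 := fun h => hadj (dist_eq_one_iff_adj.mp h)
  have h2' : G.dist x y ≠ 2 := by
    intro h2
    obtain ⟨q, hq⟩ := hr.exists_walk_length_eq_dist
    rw [h2] at hq
    cases q with
    | nil => simp at hq
    | cons h q' =>
      cases q' with
      | nil => simp at hq
      | cons h' q'' =>
        cases q'' with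
        | nil => exact hcom _ h h'
        | cons h'' q''' => simp [Walk.length_cons] at hq
  omega

end DistHelpers

lemma vb_ne_vc {S T : NES k} : vb S ≠ vc T := by simp [vb, vc]

lemma vb_inj {S T : NES k} (h : vb S = vb T) : S = T := by simpa [vb] using h

lemma vc_inj {S T : NES k} (h : vc S = vc T) : S = T := by simpa [vc] using h

lemma dist_ab_mem {a : Fin k} {S : NES k} (h : a ∈ S.val) :
    (Gk k).dist (Sum.inl a) (vb S) = 1 :=
  dist_eq_one_iff_adj.mpr (adj_ab.mpr h)

lemma dist_ab_not {a : Fin k} {S : NES k} (h : a ∉ S.val) :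
    (Gk k).dist (Sum.inl a) (vb S) = 2 := by
  obtain ⟨a', ha'⟩ := S.prop
  refine dist_eq_two (by simp [vb]) (fun hc => h (adj_ab.mp hc))
    (adj_aa.mpr (fun hc => h (hc ▸ ha'))) (adj_ab.mpr ha')

lemma dist_ac_mem {a : Fin k} {S : NES k} (h : a ∈ S.val) :
    (Gk k).dist (Sum.inl a) (vc S) = 2 :=
  dist_eq_two (by simp [vc]) not_adj_ac (adj_ab.mpr h) (adj_bc.mpr rfl)

lemma dist_ac_not {a : Fin k} {S : NES k} (h : a ∉ S.val) :
    (Gk k).dist (Sum.inl a) (vc S) = 3 := by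
  obtain ⟨a', ha'⟩ := S.prop
  refine dist_eq_three
    (Walk.cons (adj_aa.mpr (fun hc => h (hc ▸ ha')))
      (Walk.cons (adj_ab.mpr ha') (Walk.cons (adj_bc.mpr rfl) Walk.nil)))
    (by simp [Walk.length_cons]) (by simp [vc]) not_adj_ac ?_
  rintro (a'' | U | U) h1 h2
  · exact not_adj_ac h2
  · exact h ((adj_bc.mp h2) ▸ (adj_ab.mp h1))
  · exact not_adj_ac h1

lemma dist_bb {S T : NES k} (h : S ≠ T) : (Gk k).dist (vb S) (vb T) = 1 :=
  dist_eq_one_iff_adj.mpr (adj_bb.mpr h)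

lemma dist_bc_eq {S : NES k} : (Gk k).dist (vb S) (vc S) = 1 :=
  dist_eq_one_iff_adj.mpr (adj_bc.mpr rfl)

lemma dist_bc_ne {S T : NES k} (h : S ≠ T) : (Gk k).dist (vb S) (vc T) = 2 :=
  dist_eq_two vb_ne_vc (fun hc => h (adj_bc.mp hc))
    (adj_bb.mpr h) (adj_bc.mpr rfl)

lemma dist_cc {S T : NES k} (h : S ≠ T) : (Gk k).dist (vc S) (vc T) = 1 :=
  dist_eq_one_iff_adj.mpr (adj_cc.mpr h)

/-- Which vertices can distinguish `c_S` from `c_T`. -/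
lemma resolve_cc {S T : NES k} (hST : S ≠ T) {z : GkVert k}
    (hz : (Gk k).dist (vc S) z ≠ (Gk k).dist (vc T) z) :
    (∃ a : Fin k, z = Sum.inl a ∧ ¬(a ∈ S.val ↔ a ∈ T.val)) ∨
    (∃ U : NES k, (z = vb U ∨ z = vc U) ∧ (U = S ∨ U = T)) := by
  obtain a | U | U := z
  · refine Or.inl ⟨a, rfl, fun hc => hz ?_⟩
    by_cases hS : a ∈ S.val
    · rw [dist_comm, dist_ac_mem hS, dist_comm, dist_ac_mem (hc.mp hS)]
    · rw [dist_comm, dist_ac_not hS, dist_comm, dist_ac_not (fun h => hS (hc.mpr h))]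
  · refine Or.inr ⟨U, Or.inl rfl, ?_⟩
    by_contra hc
    push_neg at hc
    refine hz ?_
    show (Gk k).dist (vc S) (vb U) = (Gk k).dist (vc T) (vb U)
    rw [dist_comm (u := vc S) (v := vb U), dist_bc_ne hc.1,
      dist_comm (u := vc T) (v := vb U), dist_bc_ne hc.2]
  · refine Or.inr ⟨U, Or.inr rfl, ?_⟩
    by_contra hc
    push_neg at hc
    refine hz ?_
    show (Gk k).dist (vc S) (vc U) = (Gk k).dist (vc T) (vc U)
    rw [dist_cc hc.1.symm, dist_cc hc.2.symm]

/-- Which vertices can distinguish `b_S` from `b_T`. -/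
lemma resolve_bb {S T : NES k} (hST : S ≠ T) {z : GkVert k}
    (hz : (Gk k).dist (vb S) z ≠ (Gk k).dist (vb T) z) :
    (∃ a : Fin k, z = Sum.inl a ∧ ¬(a ∈ S.val ↔ a ∈ T.val)) ∨
    (∃ U : NES k, (z = vb U ∨ z = vc U) ∧ (U = S ∨ U = T)) := by
  obtain a | U | U := z
  · refine Or.inl ⟨a, rfl, fun hc => hz ?_⟩
    by_cases hS : a ∈ S.val
    · rw [dist_comm, dist_ab_mem hS, dist_comm, dist_ab_mem (hc.mp hS)]
    · rw [dist_comm, dist_ab_not hS, dist_comm, dist_ab_not (fun h => hS (hc.mpr h))]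
  · refine Or.inr ⟨U, Or.inl rfl, ?_⟩
    by_contra hc
    push_neg at hc
    refine hz ?_
    show (Gk k).dist (vb S) (vb U) = (Gk k).dist (vb T) (vb U)
    rw [dist_bb hc.1.symm, dist_bb hc.2.symm]
  · refine Or.inr ⟨U, Or.inr rfl, ?_⟩
    by_contra hc
    push_neg at hc
    refine hz ?_
    show (Gk k).dist (vb S) (vc U) = (Gk k).dist (vb T) (vc U)
    rw [dist_bc_ne hc.1.symm, dist_bc_ne hc.2.symm]

/-- the subscript of a `B ∪ C` vertex -/
def sub : GkVert k → Finset (Fin k)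
  | Sum.inl _ => ∅
  | Sum.inr (Sum.inl S) => S.val
  | Sum.inr (Sum.inr S) => S.val

lemma pow_ineq (k : ℕ) (hk : 3 ≤ k) : k + 1 ≤ 2 ^ (k - 1) := by
  induction k with
  | zero => omega
  | succ n ih =>
    rcases Nat.lt_or_ge n 3 with h | h
    · interval_cases n <;> simp_all <;> omega
    · have := ih (by omega)
      have h2 : 2 ^ (n + 1 - 1) = 2 * 2 ^ (n - 1) := by
        rw [show n + 1 - 1 = (n - 1) + 1 by omega, pow_succ]; ring
      omega

end GkAux

open GkAux

/-- For `k ≥ 3`, the set `A` is the unique metric basis of `G_k`: any resolving set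
of cardinality `k` equals `A`. -/
theorem unique_basis_Gk (k : ℕ) (hk : 3 ≤ k) (W : Set (GkVert k))
    (hW : IsResolving (Gk k) W) (hcard : W.ncard = k) :
    W = Set.range (Sum.inl : Fin k → GkVert k) := by
  classical
  have hWfin : W.Finite := Set.toFinite W
  have hrange : (Set.range (Sum.inl : Fin k → GkVert k)).ncard = k := by
    rw [← Set.image_univ, Set.ncard_image_of_injective _ Sum.inl_injective,
      Set.ncard_univ, Nat.card_eq_fintype_card, Fintype.card_fin]
  suffices hsub : Set.range (Sum.inl : Fin k → GkVert k) ⊆ W by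
    exact (Set.eq_of_subset_of_ncard_le hsub (by rw [hcard, hrange]) hWfin).symm
  rintro _ ⟨a, rfl⟩
  by_contra ha
  have hpow := GkAux.pow_ineq k hk
  set WF : Finset (GkVert k) := hWfin.toFinset with hWF
  have hWFcard : WF.card = k := by
    rw [hWF, ← Set.ncard_eq_toFinset_card W hWfin]; exact hcard
  have hmemWF : ∀ z, z ∈ WF ↔ z ∈ W := fun z => Set.Finite.mem_toFinset hWfin
  set TF : Finset (GkVert k) := WF.filter (fun z => ∀ b : Fin k, z ≠ Sum.inl b) with hTF
  set SSF : Finset (Finset (Fin k)) :=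
    (((Finset.univ : Finset (Fin k)).erase a).powerset).erase ∅ with hSSF
  have hSSFcard : SSF.card = 2 ^ (k - 1) - 1 := by
    rw [hSSF, Finset.card_erase_of_mem (Finset.mem_powerset.mpr (Finset.empty_subset _)),
      Finset.card_powerset, Finset.card_erase_of_mem (Finset.mem_univ a), Finset.card_univ,
      Fintype.card_fin]
  have hmemSSF : ∀ S : Finset (Fin k), S ∈ SSF ↔ S.Nonempty ∧ a ∉ S := by
    intro S
    rw [hSSF, Finset.mem_erase, Finset.mem_powerset, Finset.subset_erase,
      Finset.nonempty_iff_ne_empty]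
    simp only [Finset.subset_univ, true_and]
  -- Step 1: every element of `SSF` forces a non-`A` witness in `W`
  have H : ∀ S : Finset (Fin k), ∃ z : GkVert k, S ∈ SSF →
      z ∈ W ∧ ∃ U : NES k, (z = vb U ∨ z = vc U) ∧ U.val.erase a = S := by
    intro S
    by_cases hS : S ∈ SSF
    · obtain ⟨hSne, hSa⟩ := (hmemSSF S).mp hS
      have hins : (insert a S).Nonempty := Finset.insert_nonempty a S
      have hne2 : (⟨S, hSne⟩ : NES k) ≠ ⟨insert a S, hins⟩ := by
        intro hc
        have hcv : S = insert a S := congrArg Subtype.val hc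
        exact hSa (hcv ▸ Finset.mem_insert_self a S)
      obtain ⟨z, hzW, hzd⟩ := hW (vc ⟨S, hSne⟩) (vc ⟨insert a S, hins⟩)
        (fun hc => hne2 (vc_inj hc))
      rcases resolve_cc hne2 hzd with ⟨a', hza, hcond⟩ | ⟨U, hzU, hU⟩
      · exfalso
        have haa : a' = a := by
          by_contra hne'
          apply hcond
          simp [Finset.mem_insert, hne']
        rw [hza, haa] at hzW
        exact ha hzW
      · refine ⟨z, fun _ => ⟨hzW, U, hzU, ?_⟩⟩
        rcases hU with h | h <;> rw [h] <;>
          simp [Finset.erase_eq_of_notMem hSa, Finset.erase_insert hSa]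
    · exact ⟨Sum.inl ⟨0, by omega⟩, fun h => absurd h hS⟩
  choose f hf using H
  have hmaps : ∀ S ∈ SSF, f S ∈ TF := by
    intro S hS
    obtain ⟨hfW, U, hfU, _⟩ := hf S hS
    rw [hTF, Finset.mem_filter]
    refine ⟨(hmemWF _).mpr hfW, ?_⟩
    rcases hfU with h | h <;> rw [h] <;> intro b <;> simp [vb, vc]
  have hinj : Set.InjOn f ↑SSF := by
    intro S1 h1 S2 h2 heq
    obtain ⟨_, U1, hU1, hE1⟩ := hf S1 h1
    obtain ⟨_, U2, hU2, hE2⟩ := hf S2 h2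
    have hU12 : U1 = U2 := by
      rcases hU1 with h | h <;> rcases hU2 with h' | h' <;>
        [skip; skip; skip; skip] <;>
      · rw [h, h'] at heq
        first
          | exact vb_inj heq
          | exact vc_inj heq
          | exact absurd heq vb_ne_vc
          | exact absurd heq.symm vb_ne_vc
    rw [← hE1, ← hE2, hU12]
  have hcards : SSF.card ≤ TF.card := Finset.card_le_card_of_injOn f hmaps hinj
  rw [hSSFcard] at hcards
  -- hence `W` contains no vertex of `A` at all
  have hTFW : TF = WF := by
    refine Finset.eq_of_subset_of_card_le (Finset.filter_subset _ _) ?_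
    rw [hWFcard]; omega
  have hNoA : ∀ z ∈ W, ∀ b : Fin k, z ≠ Sum.inl b := by
    intro z hz b
    have hzTF : z ∈ TF := hTFW ▸ (hmemWF z).mpr hz
    exact (Finset.mem_filter.mp hzTF).2 b
  -- Step 2: two nonempty subsets avoid all subscripts of `W`, contradiction
  set IMG : Finset (Finset (Fin k)) := WF.image sub with hIMG
  have hIMGcard : IMG.card ≤ k := le_trans Finset.card_image_le (le_of_eq hWFcard)
  have h2 : 1 < (((Finset.univ : Finset (Finset (Fin k))).erase ∅) \ IMG).card := by
    have h3 := Finset.le_card_sdiff IMG ((Finset.univ : Finset (Finset (Fin k))).erase ∅)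
    have h4 : ((Finset.univ : Finset (Finset (Fin k))).erase ∅).card = 2 ^ k - 1 := by
      rw [Finset.card_erase_of_mem (Finset.mem_univ _), Finset.card_univ,
        Fintype.card_finset, Fintype.card_fin]
    have h5 : 2 ^ ((k - 1) + 1) = 2 ^ (k - 1) * 2 := pow_succ 2 (k - 1)
    rw [show (k - 1) + 1 = k by omega] at h5
    omega
  obtain ⟨S, hS, T, hT, hSTne⟩ := Finset.one_lt_card.mp h2
  obtain ⟨hSN, hSI⟩ := Finset.mem_sdiff.mp hS
  obtain ⟨hTN, hTI⟩ := Finset.mem_sdiff.mp hT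
  have hSne : S.Nonempty :=
    Finset.nonempty_iff_ne_empty.mpr (Finset.mem_erase.mp hSN).1
  have hTne : T.Nonempty :=
    Finset.nonempty_iff_ne_empty.mpr (Finset.mem_erase.mp hTN).1
  have hne2 : (⟨S, hSne⟩ : NES k) ≠ ⟨T, hTne⟩ :=
    fun hc => hSTne (congrArg Subtype.val hc)
  obtain ⟨z, hzW, hzd⟩ := hW (vb ⟨S, hSne⟩) (vb ⟨T, hTne⟩)
    (fun hc => hne2 (vb_inj hc))
  rcases resolve_bb hne2 hzd with ⟨a', hza, _⟩ | ⟨U, hzU, hU⟩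
  · exact hNoA z hzW a' hza
  · have hzI : sub z ∈ IMG := Finset.mem_image_of_mem sub ((hmemWF z).mpr hzW)
    rcases hzU with h | h <;> rcases hU with h' | h' <;> rw [h, h'] at hzI <;>
      first
        | exact hSI (by simpa [sub, vb, vc] using hzI)
        | exact hTI (by simpa [sub, vb, vc] using hzI)
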